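/- arXiv:1001.5224 — 4 statements merged into one kernel-verified Lean document; each statement's English description precedes it below -/
import Mathlib

section
/- Let D be an integral domain and I a nonzero fractional ideal of D. If I is flat as a D-module, then I is a t-ideal, i.e., I = I_t. -/
open scoped nonZeroDivisors

section Defs
variable (D K : Type*) [CommRing D] [IsDomain D] [Field K] [Algebra D K] [IsFractionRing D K]

/-- The endomorphism ring `(N : N) = {x ∈ K | x N ⊆ N}` of a `D`-submodule of `K`,
as a subalgebra of `K`. -/
def ends (N : Submodule D K) : Subalgebra D K where
  carrier := {x : K | ∀ y ∈ N, x * y ∈ N}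
  mul_mem' := fun {a b} ha hb y hy => by
    rw [mul_assoc]; exact ha _ (hb _ hy)
  add_mem' := fun {a b} ha hb y hy => by
    rw [add_mul]; exact N.add_mem (ha _ hy) (hb _ hy)
  algebraMap_mem' := fun r y hy => by
    rw [← Algebra.smul_def]; exact N.smul_mem r hy

/-- `N` viewed as a module over its endomorphism ring `(N : N)`. -/
noncomputable def overEnds (N : Submodule D K) : Submodule (ends D K N) K :=
  Submodule.span (ends D K N) (N : Set K)

/-- A `D`-submodule `N` of `K` is quasi-stable if it is flat as a module over its
endomorphism ring `(N : N)`. -/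
def IsQuasiStable (N : Submodule D K) : Prop :=
  Module.Flat (ends D K N) (overEnds D K N)

/-- The `t`-closure of a fractional ideal: the union of the divisorial closures
`J_v = (D : (D : J))` of the finitely generated fractional subideals `J`. -/
noncomputable def tClosure (I : FractionalIdeal D⁰ K) : Submodule D K :=
  ⨆ J : {J : FractionalIdeal D⁰ K // J ≤ I ∧ (J : Submodule D K).FG},
    ((1 / (1 / (J : FractionalIdeal D⁰ K)) : FractionalIdeal D⁰ K) : Submodule D K)

end Defs

/-!
Let `J ⊆ I` be a nonzero fractional ideal generated by finitely many `x_i`, with `x_{i₀} ≠ 0`, and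
let `d` be a common denominator, `a_i = d x_i ∈ D`. The relations `a_k x_{i₀} = a_{i₀} x_k` hold
in `I`, so by the equational criterion of flatness `x_i = ∑ⱼ b_{ij} y_j` with `y_j ∈ I` and
`a_k b_{i₀j} = a_{i₀} b_{kj}`, i.e. `b_{kj} = x_k q_j` for `q_j = b_{i₀j} / x_{i₀}`. Hence
`q_j ∈ J⁻¹` and `∑ⱼ q_j y_j = 1`, so `1 ∈ J⁻¹ I` and `J_v ⊆ J_v J⁻¹ I ⊆ I`.
-/

theorem Module.Flat.exists_factorization_of_sum_smul_eq_zero {R M : Type*} [CommRing R]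
    [AddCommGroup M] [Module R M] [Module.Flat R M] {ι κ : Type*} [Fintype ι] [Fintype κ]
    (c : κ → ι → R) (x : ι → M) (h : ∀ k, ∑ i, c k i • x i = 0) :
    ∃ (m : ℕ) (b : ι → Fin m → R) (y : Fin m → M),
      (∀ i, x i = ∑ j, b i j • y j) ∧ ∀ k j, ∑ i, c k i * b i j = 0 := by
  classical
  have hcomp : Fintype.linearCombination R x ∘ₗ Fintype.linearCombination R c = 0 := by
    ext k
    simpa [Fintype.linearCombination_apply] using h k
  obtain ⟨m, a, y, hxy, hac⟩ := exists_factorization_of_comp_eq_zero_of_free hcomp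
  refine ⟨m, fun i j => a (Pi.single i 1) j, fun j => y (Finsupp.single j 1), fun i => ?_,
    fun k j => ?_⟩
  · have hxi := LinearMap.congr_fun hxy (Pi.single i 1)
    rw [Fintype.linearCombination_apply_single, one_smul] at hxi
    rw [hxi, LinearMap.comp_apply, ← Finsupp.univ_sum_single (a (Pi.single i 1)), map_sum]
    simp_rw [← Finsupp.smul_single_one _ (a _ _), map_smul]
  · have hck : ∑ i, c k i • Pi.single i (1 : R) = c k := by
      simp_rw [← Pi.single_smul', smul_eq_mul, mul_one, Finset.univ_sum_single]
    have hack : a (c k) j = 0 := by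
      simpa using congrArg (· j) (LinearMap.congr_fun hac (Pi.single k 1))
    rw [← hck, map_sum] at hack
    simpa using hack

theorem Module.Flat.exists_factorization_of_smul_eq_smul {R M : Type*} [CommRing R]
    [AddCommGroup M] [Module R M] [Module.Flat R M] {ι : Type*} [Fintype ι]
    (x : ι → M) (a : ι → R) (i₀ : ι) (h : ∀ k, a k • x i₀ = a i₀ • x k) :
    ∃ (m : ℕ) (b : ι → Fin m → R) (y : Fin m → M),
      (∀ i, x i = ∑ j, b i j • y j) ∧ ∀ k j, a k * b i₀ j = a i₀ * b k j := by
  classical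
  let c : ι → ι → R := fun k => Pi.single i₀ (a k) - Pi.single k (a i₀)
  have hc : ∀ k, ∑ i, c k i • x i = 0 := fun k => by
    rw [← Fintype.linearCombination_apply, map_sub, Fintype.linearCombination_apply_single,
      Fintype.linearCombination_apply_single, h, sub_self]
  obtain ⟨m, b, y, hxy, hcb⟩ := exists_factorization_of_sum_smul_eq_zero c x hc
  refine ⟨m, b, y, hxy, fun k j => sub_eq_zero.mp ?_⟩
  simpa only [c, Pi.sub_apply, sub_mul, Finset.sum_sub_distrib, Pi.single_apply, ite_mul,
    zero_mul, Finset.sum_ite_eq', Finset.mem_univ, if_true] using hcb k j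

namespace FractionalIdeal

variable {D K : Type*} [CommRing D] [IsDomain D] [Field K] [Algebra D K] [IsFractionRing D K]

theorem mem_one_div_of_forall_mul_mem_one {J : FractionalIdeal D⁰ K} (hJ : J ≠ 0) {s : Set K}
    (hs : Submodule.span D s = J) {q : K} (h : ∀ g ∈ s, q * g ∈ (1 : FractionalIdeal D⁰ K)) :
    q ∈ 1 / J := by
  have hJq : (J : Submodule D K) ≤
      ((1 : FractionalIdeal D⁰ K) : Submodule D K).comap (LinearMap.mulLeft D q) := by
    rw [← hs, Submodule.span_le]
    exact h
  exact (mem_div_iff_of_ne_zero hJ).mpr fun g hg => hJq hg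

theorem one_le_one_div_mul_of_flat {I J : FractionalIdeal D⁰ K}
    (hflat : Module.Flat D (I : Submodule D K)) (hJI : J ≤ I) (hJ : J ≠ 0)
    (hfg : (J : Submodule D K).FG) : 1 ≤ 1 / J * I := by
  obtain ⟨s, hs⟩ := hfg
  obtain ⟨i₀, hi₀⟩ : ∃ i₀ : s, (i₀ : K) ≠ 0 := by
    by_contra! h
    exact hJ (coeToSubmodule_eq_bot.mp (hs ▸ Submodule.span_eq_bot.mpr fun g hg => h ⟨g, hg⟩))
  have hsJ : ∀ g : s, (g : K) ∈ J := fun g => by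
    rw [← mem_coe, ← hs]
    exact Submodule.subset_span g.2
  obtain ⟨d, hd, hdJ⟩ := J.isFractional
  choose a ha using fun g : s => hdJ g (hsJ g)
  let x : s → (I : Submodule D K) := fun g => ⟨g, hJI (hsJ g)⟩
  have hx : ∀ k, a k • x i₀ = a i₀ • x k := fun k => by
    ext
    simp only [x, Submodule.coe_smul, Algebra.smul_def, ha]
    ring
  obtain ⟨m, b, y, hxy, hab⟩ := Module.Flat.exists_factorization_of_smul_eq_smul x a i₀ hx
  have hcross : ∀ (k : s) j, (k : K) * algebraMap D K (b i₀ j) = i₀ * algebraMap D K (b k j) :=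
    fun k j => by
      have hK := congrArg (algebraMap D K) (hab k j)
      simp only [map_mul, ha, Algebra.smul_def, mul_assoc] at hK
      exact mul_left_cancel₀ (IsFractionRing.to_map_ne_zero_of_mem_nonZeroDivisors hd) hK
  let q : Fin m → K := fun j => algebraMap D K (b i₀ j) / i₀
  have hq : ∀ j, q j ∈ 1 / J := fun j =>
    mem_one_div_of_forall_mul_mem_one hJ hs fun g hg => by
      rw [mem_one_iff]
      refine ⟨b ⟨g, hg⟩ j, ?_⟩
      simp only [q]
      rw [div_mul_eq_mul_div, eq_div_iff hi₀, mul_comm _ (g : K), hcross ⟨g, hg⟩ j, mul_comm]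
  have hone : (1 : K) = ∑ j, q j * y j := by
    have hxi₀ := congrArg Subtype.val (hxy i₀)
    simp only [x, Submodule.coe_sum, Submodule.coe_smul, Algebra.smul_def] at hxi₀
    simp only [q, div_mul_eq_mul_div, ← Finset.sum_div, ← hxi₀, div_self hi₀]
  rw [one_le, ← mem_coe, coe_mul, hone]
  exact Submodule.sum_mem _ fun j _ => Submodule.mul_mem_mul (hq j) (y j).2

theorem one_div_one_div_le_of_one_le_one_div_mul {I J : FractionalIdeal D⁰ K}
    (h : 1 ≤ 1 / J * I) : 1 / (1 / J) ≤ I :=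
  calc 1 / (1 / J) = 1 / (1 / J) * 1 := (mul_one _).symm
    _ ≤ 1 / (1 / J) * (1 / J * I) := mul_le_mul_right h _
    _ = 1 / (1 / J) * (1 / J) * I := (mul_assoc _ _ _).symm
    _ ≤ 1 * I := mul_le_mul_left (mul_comm (1 / J) _ ▸ mul_one_div_le_one) I
    _ = I := one_mul I

end FractionalIdeal

open FractionalIdeal in
theorem le_tClosure {D K : Type*} [CommRing D] [IsDomain D] [Field K] [Algebra D K]
    [IsFractionRing D K] (I : FractionalIdeal D⁰ K) : (I : Submodule D K) ≤ tClosure D K I := by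
  intro z hz
  have hzI : spanSingleton D⁰ z ≤ I := spanSingleton_le_iff_mem.mpr hz
  have hfg : (spanSingleton D⁰ z : Submodule D K).FG := by
    rw [coe_spanSingleton]
    exact Submodule.fg_span_singleton z
  refine Submodule.mem_iSup_of_mem (⟨spanSingleton D⁰ z, hzI, hfg⟩ :
    {J : FractionalIdeal D⁰ K // J ≤ I ∧ (J : Submodule D K).FG}) ?_
  rw [one_div_spanSingleton, one_div_spanSingleton, inv_inv, coe_spanSingleton]
  exact Submodule.mem_span_singleton_self z

theorem tClosure_eq_self_of_flat_general
    (D K : Type*) [CommRing D] [IsDomain D] [Field K] [Algebra D K] [IsFractionRing D K]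
    (I : FractionalIdeal D⁰ K)
    (hflat : Module.Flat D (I : Submodule D K)) :
    tClosure D K I = (I : Submodule D K) := by
  refine le_antisymm (iSup_le fun ⟨J, hJI, hfg⟩ => ?_) (le_tClosure I)
  rcases eq_or_ne J 0 with rfl | hJ
  · simp
  · exact FractionalIdeal.coe_le_coe.mpr <|
      FractionalIdeal.one_div_one_div_le_of_one_le_one_div_mul <|
        FractionalIdeal.one_le_one_div_mul_of_flat hflat hJI hJ hfg

/-- A nonzero flat fractional ideal of an integral domain is a `t`-ideal. -/
theorem tClosure_eq_self_of_flat
    (D K : Type*) [CommRing D] [IsDomain D] [Field K] [Algebra D K] [IsFractionRing D K]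
    (I : FractionalIdeal D⁰ K) (hI : I ≠ 0)
    (hflat : Module.Flat D (I : Submodule D K)) :
    tClosure D K I = (I : Submodule D K) :=
  tClosure_eq_self_of_flat_general D K I hflat
end

section
/- Let D be an integral domain with the t-finite character, i.e., each proper t-ideal of D is contained in only finitely many t-maximal ideals. Then every faithfully flat nonzero ideal of D is invertible. -/
open scoped nonZeroDivisors

section TOps
variable (D K : Type*) [CommRing D] [IsDomain D] [Field K] [Algebra D K] [IsFractionRing D K]

/-- An integral ideal of `D` is a `t`-ideal if it equals its `t`-closure. -/
def IsTIdeal (I : Ideal D) : Prop :=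
  tClosure D K (I : FractionalIdeal D⁰ K) = ((I : FractionalIdeal D⁰ K) : Submodule D K)

/-- A `t`-maximal ideal: maximal among proper integral `t`-ideals. -/
def IsTMaximal (P : Ideal D) : Prop :=
  P ≠ ⊤ ∧ IsTIdeal D K P ∧ ∀ Q : Ideal D, Q ≠ ⊤ → IsTIdeal D K Q → P ≤ Q → P = Q

/-- `D` has the `t`-finite character if every proper integral `t`-ideal is contained
in only finitely many `t`-maximal ideals. -/
def HasTFiniteCharacter : Prop :=
  ∀ I : Ideal D, I ≠ ⊤ → IsTIdeal D K I →
    {P : Ideal D | IsTMaximal D K P ∧ I ≤ P}.Finite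

end TOps

/-!
Faithful flatness makes `I` locally principal: for every proper `P` some `a ∈ I \ P I` generates
`I D_P`. For prime `P` and finitely generated `J ⊆ I` this gives `s J ⊆ a D` with `s ∉ P`, hence
`s J_v ⊆ a D`, where `J_v = 1 / (1 / J)`; in particular `J_v ⊆ I`, so `I` is a `t`-ideal.
By `t`-finite character finitely many elements of `I` generate an ideal `J` that contains a local
generator of `I` at every `t`-maximal ideal containing it, and a colon-ideal argument gives
`I ⊆ J_v`. At a maximal ideal `M` with local generator `a` this yields `s I ⊆ a D` for some
`s ∉ M`, so `s/a ∈ I⁻¹` and `I I⁻¹ ⊄ M`.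
-/

namespace FractionalIdeal

variable {D K : Type*} [CommRing D] [IsDomain D] [Field K] [Algebra D K] [IsFractionRing D K]

instance : NoZeroDivisors (FractionalIdeal D⁰ K) where
  eq_zero_or_eq_zero_of_mul_eq_zero {J B} h := by
    simpa only [← coeToSubmodule_inj, coe_mul, coe_zero, Submodule.mul_eq_bot] using
      congrArg ((↑) : FractionalIdeal D⁰ K → Submodule D K) h

theorem one_div_ne_zero {J : FractionalIdeal D⁰ K} (hJ : J ≠ 0) : 1 / J ≠ 0 := by
  obtain ⟨a, ha, hJa⟩ := J.isFractional
  have hmem : algebraMap D K a ∈ 1 / J := by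
    refine (mem_div_iff_of_ne_zero hJ).mpr fun y hy => (mem_one_iff _).mpr ?_
    obtain ⟨c, hc⟩ := hJa y hy
    exact ⟨c, by rw [hc, Algebra.smul_def]⟩
  intro h
  rw [h, mem_zero_iff, IsFractionRing.to_map_eq_zero_iff] at hmem
  exact nonZeroDivisors.ne_zero ha hmem

theorem le_one_div_one_div (J : FractionalIdeal D⁰ K) : J ≤ 1 / (1 / J) := by
  rcases eq_or_ne J 0 with rfl | hJ
  · exact zero_le _
  · rw [le_div_iff_mul_le (one_div_ne_zero hJ)]
    exact mul_one_div_le_one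

theorem one_div_le_one_div_of_le {J J' : FractionalIdeal D⁰ K} (hJ : J ≠ 0) (h : J ≤ J') :
    1 / J' ≤ 1 / J := by
  rw [le_div_iff_mul_le hJ]
  exact (mul_le_mul_right h _).trans (by rw [mul_comm]; exact mul_one_div_le_one)

theorem one_div_one_div_mono {J J' : FractionalIdeal D⁰ K} (h : J ≤ J') :
    1 / (1 / J) ≤ 1 / (1 / J') := by
  rcases eq_or_ne J 0 with rfl | hJ
  · simp only [div_zero, zero_le]
  · have hJ' : J' ≠ 0 := ne_bot_of_le_ne_bot hJ h
    exact one_div_le_one_div_of_le (one_div_ne_zero hJ') (one_div_le_one_div_of_le hJ h)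

theorem one_div_one_div_one_div (J : FractionalIdeal D⁰ K) : 1 / (1 / (1 / J)) = 1 / J := by
  rcases eq_or_ne J 0 with rfl | hJ
  · simp only [div_zero]
  · exact le_antisymm (one_div_le_one_div_of_le hJ (le_one_div_one_div J)) (le_one_div_one_div _)

theorem one_div_one_div_spanSingleton (x : K) :
    1 / (1 / spanSingleton D⁰ x) = spanSingleton D⁰ x := by
  rw [one_div_spanSingleton, one_div_spanSingleton, inv_inv]

theorem one_div_one_div_mul_le (J B : FractionalIdeal D⁰ K) :
    1 / (1 / J) * B ≤ 1 / (1 / (J * B)) := by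
  rcases eq_or_ne J 0 with rfl | hJ
  · simp only [div_zero, zero_mul, zero_le]
  rcases eq_or_ne B 0 with rfl | hB
  · simp only [mul_zero, zero_le]
  have hJB : J * B ≠ 0 := mul_ne_zero hJ hB
  have hB_le : B * (1 / (J * B)) ≤ 1 / J := by
    rw [le_div_iff_mul_le hJ, mul_comm, ← mul_assoc]
    exact mul_one_div_le_one
  rw [le_div_iff_mul_le (one_div_ne_zero hJB), mul_assoc]
  calc 1 / (1 / J) * (B * (1 / (J * B))) ≤ 1 / (1 / J) * (1 / J) := by gcongr
    _ ≤ 1 := by rw [mul_comm]; exact mul_one_div_le_one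

theorem one_div_one_div_mul_le_of_mul_le {J B C : FractionalIdeal D⁰ K}
    (hC : 1 / (1 / C) = C) (h : J * B ≤ C) : 1 / (1 / J) * B ≤ C :=
  (one_div_one_div_mul_le J B).trans ((one_div_one_div_mono h).trans_eq hC)

end FractionalIdeal

namespace Ideal

variable {R : Type*} [CommRing R]

/-- The elementwise form of `I R_P = a R_P`. -/
def IsLocalGenerator (I P : Ideal R) (a : R) : Prop :=
  a ∈ I ∧ ∀ b ∈ I, ∃ s ∉ P, s * b ∈ span {a}

/-- Any `a ∈ I \ P I` works: flatness makes the relation `a • b - b • a = 0` in `I` trivial. -/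
theorem exists_isLocalGenerator_of_faithfullyFlat (I : Ideal R) [Module.FaithfullyFlat R I]
    {P : Ideal R} (hP : P ≠ ⊤) : ∃ a ≠ 0, I.IsLocalGenerator P a := by
  obtain ⟨a, ha⟩ : ∃ a : I, a ∉ P • (⊤ : Submodule R I) := by
    by_contra! h
    exact (Module.FaithfullyFlat.iff_flat_and_proper_ideal R I).mp ‹_› |>.2 P hP
      (eq_top_iff.mpr fun m _ => h m)
  refine ⟨a, fun h0 => ha (by rw [show a = 0 from Subtype.ext h0]; exact zero_mem _), a.2,
    fun b hb => ?_⟩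
  have hrel : ∑ i, ![(a : R), -b] i • ![⟨b, hb⟩, a] i = (0 : I) := by
    ext
    simp only [Fin.sum_univ_two, Matrix.cons_val_zero, Matrix.cons_val_one,
      Matrix.cons_val_fin_one, Submodule.coe_add, Submodule.coe_smul, smul_eq_mul, neg_mul,
      ZeroMemClass.coe_zero]
    ring
  obtain ⟨k, c, y, hcy, hc⟩ := Module.Flat.iff_forall_isTrivialRelation.mp inferInstance hrel
  obtain ⟨j, hj⟩ : ∃ j, c 1 j ∉ P := by
    by_contra! h
    refine ha ?_
    rw [show a = ![⟨b, hb⟩, a] 1 from rfl, hcy 1]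
    exact Submodule.sum_mem _ fun j _ => Submodule.smul_mem_smul (h j) Submodule.mem_top
  refine ⟨c 1 j, hj, mem_span_singleton'.mpr ⟨c 0 j, ?_⟩⟩
  have := hc j
  simp only [Fin.sum_univ_two, Matrix.cons_val_zero, Matrix.cons_val_one,
    Matrix.cons_val_fin_one] at this
  linear_combination this

theorem IsLocalGenerator.exists_span_singleton_mul_le {I P J : Ideal R} [P.IsPrime] {a : R}
    (ha : I.IsLocalGenerator P a) (hJ : J.FG) (hJI : J ≤ I) :
    ∃ s ∉ P, span {s} * J ≤ span {a} := by
  induction J, hJ using Submodule.fg_induction with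
  | singleton b =>
    obtain ⟨s, hs, hsb⟩ := ha.2 b (hJI (Submodule.mem_span_singleton_self b))
    refine ⟨s, hs, ?_⟩
    rwa [submodule_span_eq, span_singleton_mul_span_singleton, span_singleton_le_iff_mem]
  | sup J₁ J₂ _ _ ih₁ ih₂ =>
    obtain ⟨s₁, hs₁, h₁⟩ := ih₁ (le_trans le_sup_left hJI)
    obtain ⟨s₂, hs₂, h₂⟩ := ih₂ (le_trans le_sup_right hJI)
    refine ⟨s₁ * s₂, ‹P.IsPrime›.mul_notMem hs₁ hs₂, ?_⟩
    have h₁' : span {s₁ * s₂} * J₁ ≤ span {a} := by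
      rw [← span_singleton_mul_span_singleton, mul_right_comm]
      exact le_trans (mul_mono_left h₁) mul_le_left
    have h₂' : span {s₁ * s₂} * J₂ ≤ span {a} := by
      rw [← span_singleton_mul_span_singleton, mul_assoc]
      exact le_trans (mul_mono_right h₂) mul_le_right
    rw [mul_sup]
    exact sup_le h₁' h₂'

end Ideal

theorem Submodule.mem_of_forall_isMaximal {R M : Type*} [CommRing R] [AddCommGroup M]
    [Module R M] {N : Submodule R M} {x : M}
    (h : ∀ P : Ideal R, P.IsMaximal → ∃ s ∉ P, s • x ∈ N) : x ∈ N := by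
  have htop : N.colon {x} = ⊤ := by
    by_contra hne
    obtain ⟨P, hP, hle⟩ := Ideal.exists_le_maximal _ hne
    obtain ⟨s, hs, hsx⟩ := h P hP
    exact hs (hle (mem_colon_singleton.mpr hsx))
  simpa using mem_colon_singleton.mp (htop ▸ mem_top : (1 : R) ∈ N.colon {x})

section TIdeals

open FractionalIdeal

variable {D K : Type*} [CommRing D] [IsDomain D] [Field K] [Algebra D K] [IsFractionRing D K]

theorem one_div_one_div_le_tClosure {X J : FractionalIdeal D⁰ K} (hJX : J ≤ X)
    (hJ : (J : Submodule D K).FG) :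
    ((1 / (1 / J) : FractionalIdeal D⁰ K) : Submodule D K) ≤ tClosure D K X :=
  le_iSup (fun J : {J : FractionalIdeal D⁰ K // J ≤ X ∧ (J : Submodule D K).FG} =>
    ((1 / (1 / (J : FractionalIdeal D⁰ K)) : FractionalIdeal D⁰ K) : Submodule D K))
    ⟨J, hJX, hJ⟩

theorem isTIdeal_iff {A : Ideal D} : IsTIdeal D K A ↔
    ∀ J : Ideal D, J.FG → J ≤ A → 1 / (1 / (J : FractionalIdeal D⁰ K)) ≤ A := by
  have hfg := coeIdeal_fg (P := K) D⁰ (IsFractionRing.injective D K)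
  constructor
  · intro hA J hJ hJA
    rw [← coe_le_coe, ← hA]
    exact one_div_one_div_le_tClosure ((coeIdeal_le_coeIdeal K).mpr hJA) ((hfg J).mpr hJ)
  · intro h
    refine le_antisymm (iSup_le ?_) fun x hx => ?_
    · rintro ⟨J, hJA, hJ⟩
      obtain ⟨J, rfl⟩ := le_one_iff_exists_coeIdeal.mp (hJA.trans coeIdeal_le_one)
      exact coe_le_coe.mpr (h J ((hfg J).mp hJ) ((coeIdeal_le_coeIdeal K).mp hJA))
    · obtain ⟨b, hb, rfl⟩ := (mem_coeIdeal D⁰).mp hx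
      have hbA : Ideal.span {b} ≤ A := (Ideal.span_singleton_le_iff_mem A).mpr hb
      refine one_div_one_div_le_tClosure ((coeIdeal_le_coeIdeal K).mpr hbA)
        ((hfg _).mpr (Submodule.fg_span_singleton b)) ?_
      exact le_one_div_one_div _ (mem_coeIdeal_of_mem D⁰ (Ideal.mem_span_singleton_self b))

theorem isTIdeal_of_one_div_one_div_eq {A : Ideal D}
    (hA : 1 / (1 / (A : FractionalIdeal D⁰ K)) = A) : IsTIdeal D K A :=
  isTIdeal_iff.mpr fun _ _ hJA =>
    (one_div_one_div_mono ((coeIdeal_le_coeIdeal K).mpr hJA)).trans_eq hA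

theorem isTIdeal_colon {V : FractionalIdeal D⁰ K} (hV : 1 / (1 / V) = V) (x : K) :
    IsTIdeal D K ((V : Submodule D K).colon {x}) := by
  refine isTIdeal_iff.mpr fun G _ hG => ?_
  have hGx : (G : FractionalIdeal D⁰ K) * spanSingleton D⁰ x ≤ V := by
    refine mul_le.mpr fun _ hi _ hj => ?_
    obtain ⟨g, hg, rfl⟩ := (mem_coeIdeal D⁰).mp hi
    obtain ⟨r, rfl⟩ := (mem_spanSingleton D⁰).mp hj
    rw [mul_smul_comm, ← Algebra.smul_def]
    exact Submodule.smul_mem _ r (Submodule.mem_colon_singleton.mp (hG hg))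
  have hGv := one_div_one_div_mul_le_of_mul_le hV hGx
  have hG1 : 1 / (1 / (G : FractionalIdeal D⁰ K)) ≤ 1 :=
    (one_div_one_div_mono coeIdeal_le_one).trans_eq
      (by rw [FractionalIdeal.div_one, FractionalIdeal.div_one])
  intro y hy
  obtain ⟨r, rfl⟩ := (mem_one_iff D⁰).mp (hG1 hy)
  refine (mem_coeIdeal D⁰).mpr ⟨r, Submodule.mem_colon_singleton.mpr ?_, rfl⟩
  rw [Algebra.smul_def]
  exact hGv (mul_mem_mul hy (mem_spanSingleton_self D⁰ x))

theorem exists_isTMaximal_le {A : Ideal D} (hA : A ≠ ⊤) (hT : IsTIdeal D K A) :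
    ∃ P, IsTMaximal D K P ∧ A ≤ P := by
  suffices hchain : ∀ c ⊆ {Q : Ideal D | Q ≠ ⊤ ∧ IsTIdeal D K Q}, IsChain (· ≤ ·) c →
      ∀ Q ∈ c, ∃ ub ∈ {Q : Ideal D | Q ≠ ⊤ ∧ IsTIdeal D K Q}, ∀ Q' ∈ c, Q' ≤ ub by
    obtain ⟨P, hAP, hP⟩ := zorn_le_nonempty₀ _ hchain A ⟨hA, hT⟩
    exact ⟨P, ⟨hP.prop.1, hP.prop.2, fun Q hQ hTQ hPQ => le_antisymm hPQ (hP.2 ⟨hQ, hTQ⟩ hPQ)⟩,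
      hAP⟩
  intro c hc hchain Q hQ
  have hcompact : ∀ J : Ideal D, J.FG → J ≤ sSup c → ∃ Q ∈ c, J ≤ Q := fun J hJ hJc =>
    (CompleteLattice.isCompactElement_iff_le_of_directed_sSup_le (k := J)).mp
      ((Submodule.fg_iff_compact J).mp hJ) c ⟨Q, hQ⟩ hchain.directedOn hJc
  refine ⟨sSup c, ⟨fun htop => ?_, isTIdeal_iff.mpr fun J hJ hJc => ?_⟩, fun _ => le_sSup⟩
  · obtain ⟨Q, hQc, hQ⟩ := hcompact ⊤ ⟨{1}, by simp⟩ htop.ge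
    exact (hc hQc).1 (top_le_iff.mp hQ)
  · obtain ⟨Q, hQc, hJQ⟩ := hcompact J hJ hJc
    exact (isTIdeal_iff.mp (hc hQc).2 J hJ hJQ).trans
      ((coeIdeal_le_coeIdeal K).mpr (le_sSup hQc))

end TIdeals

section LocallyPrincipal

open FractionalIdeal

variable {D K : Type*} [CommRing D] [IsDomain D] [Field K] [Algebra D K] [IsFractionRing D K]

theorem Ideal.IsLocalGenerator.exists_one_div_one_div_mul_le {I P J : Ideal D} [P.IsPrime]
    {a : D} (ha : I.IsLocalGenerator P a) (hJ : J.FG) (hJI : J ≤ I) :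
    ∃ s ∉ P, 1 / (1 / (J : FractionalIdeal D⁰ K)) * spanSingleton D⁰ (algebraMap D K s) ≤
      spanSingleton D⁰ (algebraMap D K a) := by
  obtain ⟨s, hs, hsJ⟩ := ha.exists_span_singleton_mul_le hJ hJI
  refine ⟨s, hs, one_div_one_div_mul_le_of_mul_le (one_div_one_div_spanSingleton _) ?_⟩
  rw [← coeIdeal_span_singleton, ← coeIdeal_span_singleton, ← coeIdeal_mul, mul_comm]
  exact (coeIdeal_le_coeIdeal K).mpr hsJ

theorem isTIdeal_of_isLocalGenerator {I : Ideal D}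
    (hI : ∀ M : Ideal D, M.IsMaximal → ∃ a, I.IsLocalGenerator M a) : IsTIdeal D K I := by
  refine isTIdeal_iff.mpr fun J hJ hJI x hx => ?_
  refine mem_coe.mp (Submodule.mem_of_forall_isMaximal fun M hM => ?_)
  obtain ⟨a, ha⟩ := hI M hM
  obtain ⟨s, hs, hJs⟩ := ha.exists_one_div_one_div_mul_le (K := K) hJ hJI
  refine ⟨s, hs, ?_⟩
  have haI : spanSingleton D⁰ (algebraMap D K a) ≤ I :=
    spanSingleton_le_iff_mem.mpr (mem_coeIdeal_of_mem D⁰ ha.1)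
  rw [Algebra.smul_def, mul_comm]
  exact haI (hJs (mul_mem_mul hx (mem_spanSingleton_self D⁰ _)))

theorem coeIdeal_le_one_div_one_div_of_isLocalGenerator {I J : Ideal D}
    (h : ∀ Q, IsTMaximal D K Q → J ≤ Q → ∃ a ∈ J, I.IsLocalGenerator Q a) :
    (I : FractionalIdeal D⁰ K) ≤ 1 / (1 / (J : FractionalIdeal D⁰ K)) := by
  intro x hx
  obtain ⟨b, hb, rfl⟩ := (mem_coeIdeal D⁰).mp hx
  set F : Ideal D := ((1 / (1 / (J : FractionalIdeal D⁰ K)) : FractionalIdeal D⁰ K) :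
    Submodule D K).colon {algebraMap D K b}
  have mem_F : ∀ s, s * b ∈ J → s ∈ F := fun s hs => by
    rw [Submodule.mem_colon_singleton, Algebra.smul_def, ← map_mul]
    exact le_one_div_one_div _ (mem_coeIdeal_of_mem D⁰ hs)
  suffices hF : F = ⊤ by
    simpa using Submodule.mem_colon_singleton.mp (hF ▸ Submodule.mem_top : (1 : D) ∈ F)
  by_contra hF
  obtain ⟨Q, hQ, hFQ⟩ := exists_isTMaximal_le hF (isTIdeal_colon (one_div_one_div_one_div _) _)
  obtain ⟨a, haJ, ha⟩ := h Q hQ fun s hs => hFQ (mem_F s (J.mul_mem_right b hs))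
  obtain ⟨s, hs, hsb⟩ := ha.2 b hb
  exact hs (hFQ (mem_F s ((Ideal.span_singleton_le_iff_mem J).mpr haJ hsb)))

theorem exists_fg_le_one_div_one_div (hfc : HasTFiniteCharacter D K) {I : Ideal D}
    (hI : I ≠ ⊤) (hT : IsTIdeal D K I)
    (hloc : ∀ P, IsTMaximal D K P → I ≤ P → ∃ a, I.IsLocalGenerator P a) :
    ∃ J : Ideal D, J.FG ∧ J ≤ I ∧
      (I : FractionalIdeal D⁰ K) ≤ 1 / (1 / (J : FractionalIdeal D⁰ K)) := by
  choose! a ha using hloc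
  set S := {P : Ideal D | IsTMaximal D K P ∧ I ≤ P}
  have hS : S.Finite := hfc I hI hT
  have haS : a '' S ⊆ I := Set.image_subset_iff.mpr fun P hP => (ha P hP.1 hP.2).1
  have hJ₀ : (Ideal.span (a '' S)).FG := Submodule.fg_span (hS.image a)
  -- The divisorial ideal `W = (a_P : P ∈ S)_v ⊆ I` is a proper `t`-ideal, so finitely many
  -- `t`-maximal ideals contain it; each of those not containing `I` is avoided by some `c_Q ∈ I`.
  have hJ₀v := isTIdeal_iff.mp hT _ hJ₀ (Ideal.span_le.mpr haS)
  obtain ⟨W, hW⟩ := le_one_iff_exists_coeIdeal.mp (hJ₀v.trans coeIdeal_le_one)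
  have hWI : W ≤ I := (coeIdeal_le_coeIdeal K).mp (hW ▸ hJ₀v)
  set U := {Q : Ideal D | IsTMaximal D K Q ∧ W ≤ Q ∧ ¬ I ≤ Q}
  have hU : U.Finite := (hfc W (ne_top_of_le_ne_top hI hWI)
    (isTIdeal_of_one_div_one_div_eq (by rw [hW, one_div_one_div_one_div]))).subset
    fun Q hQ => ⟨hQ.1, hQ.2.1⟩
  choose! c hc using fun Q (hQ : Q ∈ U) => SetLike.not_le_iff_exists.mp hQ.2.2
  refine ⟨Ideal.span (a '' S ∪ c '' U), Submodule.fg_span ((hS.image a).union (hU.image c)),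
    Ideal.span_le.mpr (Set.union_subset haS ?_),
    coeIdeal_le_one_div_one_div_of_isLocalGenerator fun Q hQ hJQ => ?_⟩
  · rintro _ ⟨Q, hQ, rfl⟩
    exact (hc Q hQ).1
  have hIQ : I ≤ Q := by
    by_contra hIQ
    have hWQ : W ≤ Q := (coeIdeal_le_coeIdeal K).mp (hW ▸ isTIdeal_iff.mp hQ.2.1 _ hJ₀
      ((Ideal.span_mono Set.subset_union_left).trans hJQ))
    have hQU : Q ∈ U := ⟨hQ, hWQ, hIQ⟩
    exact (hc Q hQU).2 (hJQ (Ideal.subset_span (Or.inr ⟨Q, hQU, rfl⟩)))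
  exact ⟨a Q, Ideal.subset_span (Or.inl ⟨Q, ⟨hQ, hIQ⟩, rfl⟩), ha Q hQ hIQ⟩

theorem mul_inv_eq_one_of_le_one_div_one_div {I J : Ideal D}
    (hloc : ∀ M : Ideal D, M.IsMaximal → ∃ a ≠ 0, I.IsLocalGenerator M a)
    (hJ : J.FG) (hJI : J ≤ I)
    (hIJ : (I : FractionalIdeal D⁰ K) ≤ 1 / (1 / (J : FractionalIdeal D⁰ K))) :
    (I : FractionalIdeal D⁰ K) * (I : FractionalIdeal D⁰ K)⁻¹ = 1 := by
  rw [inv_eq]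
  obtain ⟨T, hT⟩ :=
    le_one_iff_exists_coeIdeal.mp (mul_one_div_le_one (I := (I : FractionalIdeal D⁰ K)))
  rw [← hT, ← coeIdeal_top, (coeIdeal_injective (K := K)).eq_iff]
  by_contra hT_top
  obtain ⟨M, hM, hTM⟩ := T.exists_le_maximal hT_top
  obtain ⟨a, ha0, ha⟩ := hloc M hM
  obtain ⟨s, hs, hJs⟩ := ha.exists_one_div_one_div_mul_le (K := K) hJ hJI
  have hI0 : (I : FractionalIdeal D⁰ K) ≠ 0 :=
    coeIdeal_ne_zero.mpr ((Submodule.ne_bot_iff _).mpr ⟨a, ha.1, ha0⟩)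
  have ha0' : algebraMap D K a ≠ 0 := IsFractionRing.to_map_eq_zero_iff.not.mpr ha0
  have hsa : algebraMap D K s / algebraMap D K a ∈ 1 / (I : FractionalIdeal D⁰ K) := by
    refine (mem_div_iff_of_ne_zero hI0).mpr fun y hy => (mem_one_iff D⁰).mpr ?_
    obtain ⟨d, hd⟩ := (mem_spanSingleton D⁰).mp
      (hJs (mul_mem_mul (hIJ hy) (mem_spanSingleton_self D⁰ _)))
    refine ⟨d, ?_⟩
    rw [Algebra.smul_def] at hd
    field_simp
    rw [hd, mul_comm]
  have hsT : algebraMap D K s ∈ (T : FractionalIdeal D⁰ K) := by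
    rw [hT, ← mul_div_cancel₀ (algebraMap D K s) ha0']
    exact mul_mem_mul (mem_coeIdeal_of_mem D⁰ ha.1) hsa
  obtain ⟨t, ht, hts⟩ := (mem_coeIdeal D⁰).mp hsT
  exact hs (hTM (IsFractionRing.injective D K hts ▸ ht))

end LocallyPrincipal

theorem invertible_of_faithfullyFlat_of_tFiniteCharacter_general
    (D K : Type*) [CommRing D] [IsDomain D] [Field K] [Algebra D K] [IsFractionRing D K]
    (hfc : HasTFiniteCharacter D K)
    (I : Ideal D) (hff : Module.FaithfullyFlat D I) :
    (I : FractionalIdeal D⁰ K) * (I : FractionalIdeal D⁰ K)⁻¹ = 1 := by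
  have hloc : ∀ P : Ideal D, P ≠ ⊤ → ∃ a ≠ 0, I.IsLocalGenerator P a :=
    fun P hP => I.exists_isLocalGenerator_of_faithfullyFlat hP
  rcases eq_or_ne I ⊤ with rfl | hI
  · rw [FractionalIdeal.coeIdeal_top, inv_one, mul_one]
  have hT : IsTIdeal D K I :=
    isTIdeal_of_isLocalGenerator fun M hM => (hloc M hM.ne_top).imp fun _ => And.right
  obtain ⟨J, hJ, hJI, hIJ⟩ := exists_fg_le_one_div_one_div hfc hI hT
    fun P hP _ => (hloc P hP.1).imp fun _ => And.right
  exact mul_inv_eq_one_of_le_one_div_one_div (fun M hM => hloc M hM.ne_top) hJ hJI hIJ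

/-- If `D` has the `t`-finite character, then every faithfully flat nonzero ideal of `D`
is invertible. -/
theorem invertible_of_faithfullyFlat_of_tFiniteCharacter
    (D K : Type*) [CommRing D] [IsDomain D] [Field K] [Algebra D K] [IsFractionRing D K]
    (hfc : HasTFiniteCharacter D K)
    (I : Ideal D) (hI : I ≠ ⊥) (hff : Module.FaithfullyFlat D I) :
    (I : FractionalIdeal D⁰ K) * (I : FractionalIdeal D⁰ K)⁻¹ = 1 :=
  invertible_of_faithfullyFlat_of_tFiniteCharacter_general D K hfc I hff
end

section
/- Let D be an integral domain and I a nonzero fractional ideal of D that is flat as a D-module. Then I is a t-ideal of the ring (I:I), i.e., I equals its t-closure computed with respect to (I:I). -/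
/-!
Let `S = (I : I)`, let `F ⊆ I` be generated over `S` by `a₁, …, aₙ`, and `F₀ = Da₁ + ⋯ + Daₙ`.
Since `I` is flat and `I ⊗ K → K` is injective, multiplication by `I` commutes with finite
intersections of `D`-submodules of `K`; as `1 ∈ (D : aᵢ) I` for every `i`, this gives
`1 ∈ (⋂ᵢ (D : aᵢ)) I = (D : F₀) I`. For `x ∈ (S : (S : F))` we have `x (D : F₀) ⊆ S`, hence
`x = x · 1 ∈ S I ⊆ I`.
-/

open scoped nonZeroDivisors

section
variable (D K : Type*) [CommRing D] [IsDomain D] [Field K] [Algebra D K] [IsFractionRing D K]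

/-- The `t`-closure of a submodule of `K` over a subalgebra `S` of `K`:
the union of `(S : (S : F))` over finitely generated `S`-submodules `F ≤ J`. -/
noncomputable def tClosureOver (S : Subalgebra D K) (J : Submodule S K) : Submodule S K :=
  ⨆ F : {F : Submodule S K // F ≤ J ∧ F.FG},
    (1 / (1 / (F : Submodule S K)) : Submodule S K)

end

open TensorProduct

theorem Subalgebra.mem_one_submodule_iff {R A : Type*} [CommSemiring R] [CommSemiring A]
    [Algebra R A] {S : Subalgebra R A} {x : A} : x ∈ (1 : Submodule S A) ↔ x ∈ S := by
  simp [Submodule.mem_one]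

namespace Submodule

variable {R A : Type*} [CommRing R] [CommRing A] [Algebra R A]

/-- `A ⊗[R] N` is the localization of `N ⊆ A`, and localization preserves injectivity. -/
theorem injective_mul'_comp_lTensor_of_isLocalization (M : Submonoid R) [IsLocalization M A]
    (N : Submodule R A) :
    Function.Injective (LinearMap.mul' R A ∘ₗ N.subtype.lTensor A) :=
  IsLocalizedModule.injective_of_map_zero M (TensorProduct.mk R A N 1) fun n hn => by
    simp_all

theorem inf_mul_of_flat (M : Submonoid R) [IsLocalization M A] (B C N : Submodule R A)
    [Module.Flat R N] : (B ⊓ C) * N = B * N ⊓ C * N := by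
  refine le_antisymm (le_inf (mul_le_mul_left inf_le_left _) (mul_le_mul_left inf_le_right _)) ?_
  rintro z ⟨hzB, hzC⟩
  rw [← mulMap_range] at hzB hzC ⊢
  obtain ⟨u, rfl⟩ := hzB
  obtain ⟨v, huv⟩ := hzC
  -- Tensor `0 → B ⊓ C → B × C → A` with `N`: the pair `(u, -v)` dies in `A ⊗ N`, so it comes
  -- from `(B ⊓ C) ⊗ N`.
  let f : ↥(B ⊓ C) →ₗ[R] ↥B × ↥C := (inclusion inf_le_left).prod (inclusion inf_le_right)
  let g : ↥B × ↥C →ₗ[R] A := B.subtype.coprod (-C.subtype)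
  have hfg : Function.Exact f g := by
    rintro ⟨b, c⟩
    show (b : A) + -(c : A) = 0 ↔ _
    rw [← sub_eq_add_neg, sub_eq_zero]
    refine ⟨fun h => ⟨⟨b, b.2, h ▸ c.2⟩, Prod.ext rfl (Subtype.ext h)⟩, ?_⟩
    rintro ⟨x, hx⟩
    obtain ⟨rfl, rfl⟩ := Prod.ext_iff.mp hx
    rfl
  let w := (LinearMap.inl R B C).rTensor N u + (LinearMap.inr R B C).rTensor N v
  have hmul : ∀ P : Submodule R A,
      LinearMap.mul' R A ∘ₗ N.subtype.lTensor A ∘ₗ P.subtype.rTensor N = mulMap P N :=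
    fun _ => TensorProduct.ext' fun _ _ => rfl
  have hw : g.rTensor N w = 0 := by
    apply injective_mul'_comp_lTensor_of_isLocalization M N
    rw [map_add, ← LinearMap.rTensor_comp_apply, ← LinearMap.rTensor_comp_apply,
      LinearMap.coprod_inl, LinearMap.coprod_inr, LinearMap.rTensor_neg, LinearMap.neg_apply,
      map_zero, map_add, map_neg, ← LinearMap.comp_apply, ← LinearMap.comp_apply,
      LinearMap.comp_assoc, LinearMap.comp_assoc, hmul, hmul, huv, add_neg_cancel]
  obtain ⟨w', hw'⟩ := (Module.Flat.rTensor_exact N hfg w).mp hw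
  have hu : (inclusion inf_le_left).rTensor N w' = u := by
    rw [show inclusion inf_le_left = LinearMap.fst R B C ∘ₗ f from rfl,
      LinearMap.rTensor_comp_apply, hw', map_add, ← LinearMap.rTensor_comp_apply,
      ← LinearMap.rTensor_comp_apply,
      LinearMap.fst_comp_inl, LinearMap.fst_comp_inr, LinearMap.rTensor_id_apply,
      LinearMap.rTensor_zero, LinearMap.zero_apply, add_zero]
  exact ⟨w', by rw [← hu, ← LinearMap.comp_apply, mulMap_comp_rTensor]⟩

section Div

variable {R A : Type*} [CommSemiring R] [CommSemiring A] [Algebra R A]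

theorem mem_div_span_iff {I : Submodule R A} {s : Set A} {x : A} :
    x ∈ I / span R s ↔ ∀ a ∈ s, x * a ∈ I :=
  span_le (p := I.comap (LinearMap.mulLeft R x))

theorem div_span_eq_iInf (I : Submodule R A) (s : Finset A) :
    I / span R (s : Set A) = ⨅ a ∈ s, I / span R {a} := by
  ext x
  simp [mem_iInf, mem_div_span_iff]

theorem one_div_span_le_restrictScalars_one_div_span (S : Subalgebra R A) (s : Set A) :
    1 / span R s ≤ (1 / span S s).restrictScalars R := fun t ht => by
  rw [restrictScalars_mem, mem_div_span_iff]
  intro a ha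
  obtain ⟨r, hr⟩ := mem_one.mp (mem_div_span_iff.mp ht a ha)
  exact Subalgebra.mem_one_submodule_iff.mpr (hr ▸ S.algebraMap_mem r)

end Div

section Field

variable {R K : Type*} [CommRing R] [Field K] [Algebra R K]

theorem top_mul_of_ne_bot {N : Submodule R K} (hN : N ≠ ⊥) : ⊤ * N = ⊤ := by
  obtain ⟨y, hy, hy0⟩ := exists_mem_ne_zero_of_ne_bot hN
  refine eq_top_iff.mpr fun k _ => ?_
  rw [← div_mul_cancel₀ k hy0]
  exact mul_mem_mul mem_top hy

theorem one_mem_one_div_span_singleton_mul {N : Submodule R K} (hN : N ≠ ⊥) {a : K}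
    (ha : a ∈ N) : 1 ∈ 1 / span R {a} * N := by
  by_cases ha0 : a = 0
  · have : 1 / span R {a} = ⊤ := eq_top_iff.mpr fun x _ =>
      mem_div_span_iff.mpr fun b hb => by simp [Set.mem_singleton_iff.mp hb, ha0]
    rw [this, top_mul_of_ne_bot hN]
    exact mem_top
  · rw [← inv_mul_cancel₀ ha0]
    refine mul_mem_mul ?_ ha
    rw [mem_div_span_iff]
    simpa [inv_mul_cancel₀ ha0] using (one_le (P := (1 : Submodule R K))).mp le_rfl

variable [IsFractionRing R K]

theorem iInf_mul_of_flat {ι : Type*} {N : Submodule R K} [Module.Flat R N] (hN : N ≠ ⊥)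
    (s : Finset ι) (B : ι → Submodule R K) : (⨅ i ∈ s, B i) * N = ⨅ i ∈ s, B i * N := by
  classical
  induction s using Finset.induction_on with
  | empty => simpa using top_mul_of_ne_bot hN
  | insert a s _ ih =>
    rw [Finset.iInf_insert, Finset.iInf_insert, inf_mul_of_flat R⁰, ih]

theorem one_mem_one_div_span_mul_of_flat {N : Submodule R K} [Module.Flat R N] (hN : N ≠ ⊥)
    {s : Finset K} (hs : (s : Set K) ⊆ N) : 1 ∈ 1 / span R (s : Set K) * N := by
  rw [div_span_eq_iInf, iInf_mul_of_flat hN, mem_iInf]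
  exact fun a => mem_iInf _ |>.mpr fun ha => one_mem_one_div_span_singleton_mul hN (hs ha)

end Field

end Submodule

open Submodule

section EndRing

variable {D K : Type*} [CommRing D] [Field K] [Algebra D K]

theorem mem_overEnds {N : Submodule D K} {x : K} : x ∈ overEnds D K N ↔ x ∈ N := by
  refine ⟨fun hx => ?_, fun hx => subset_span hx⟩
  induction hx using span_induction with
  | mem y hy => exact hy
  | zero => exact N.zero_mem
  | add _ _ _ _ h₁ h₂ => exact N.add_mem h₁ h₂
  | smul r y _ hy => exact r.2 y hy

theorem le_tClosureOver (S : Subalgebra D K) (J : Submodule S K) : J ≤ tClosureOver D K S J :=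
  fun x hx => mem_iSup_of_mem
    ⟨span S {x}, (span_singleton_le_iff_mem _ _).mpr hx, fg_span_singleton x⟩
    (le_div_iff_mul_le.mpr mul_one_div_le_one (mem_span_singleton_self x))

theorem mem_of_one_mem_mul {N T : Submodule D K} (h1 : (1 : K) ∈ T * N) {x : K}
    (hx : ∀ t ∈ T, x * t ∈ ends D K N) : x ∈ N := by
  simpa using Submodule.mul_induction_on h1 (C := fun z => x * z ∈ N)
    (fun t ht y hy => by rw [← mul_assoc]; exact hx t ht y hy)
    (fun _ _ h₁ h₂ => by rw [mul_add]; exact N.add_mem h₁ h₂)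

theorem tClosureOver_ends_le_of_flat [IsFractionRing D K] {N : Submodule D K} [Module.Flat D N]
    (hN : N ≠ ⊥) :
    tClosureOver D K (ends D K N) (overEnds D K N) ≤ overEnds D K N := by
  refine iSup_le fun ⟨F, hFN, s, hs⟩ x hx => mem_overEnds.mpr <|
    mem_of_one_mem_mul (T := 1 / span D s) ?_ fun t ht => ?_
  · exact one_mem_one_div_span_mul_of_flat hN fun a ha =>
      mem_overEnds.mp (hFN (hs ▸ subset_span ha))
  · have ht' := one_div_span_le_restrictScalars_one_div_span (ends D K N) s ht
    rw [restrictScalars_mem, hs] at ht'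
    exact Subalgebra.mem_one_submodule_iff.mp (mem_div_iff_forall_mul_mem.mp hx t ht')

end EndRing

theorem flat_is_tIdeal_of_endRing_general
    (D K : Type*) [CommRing D] [Field K] [Algebra D K] [IsFractionRing D K]
    (I : FractionalIdeal D⁰ K) (hI : I ≠ 0)
    (hflat : Module.Flat D (I : Submodule D K)) :
    tClosureOver D K (ends D K (I : Submodule D K)) (overEnds D K (I : Submodule D K))
      = overEnds D K (I : Submodule D K) :=
  le_antisymm (tClosureOver_ends_le_of_flat (mt FractionalIdeal.coeToSubmodule_eq_bot.mp hI))
    (le_tClosureOver _ _)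

/-- A flat nonzero fractional ideal `I` of `D` is a `t`-ideal of its endomorphism ring
`(I : I)`. -/
theorem flat_is_tIdeal_of_endRing
    (D K : Type*) [CommRing D] [IsDomain D] [Field K] [Algebra D K] [IsFractionRing D K]
    (I : FractionalIdeal D⁰ K) (hI : I ≠ 0)
    (hflat : Module.Flat D (I : Submodule D K)) :
    tClosureOver D K (ends D K (I : Submodule D K)) (overEnds D K (I : Submodule D K))
      = overEnds D K (I : Submodule D K) :=
  flat_is_tIdeal_of_endRing_general D K I hI hflat
end

section
/- Let D be an integral domain and T an overring of D such that every nonzero fractional ideal of T is of the form IT for some nonzero fractional ideal I of D. If D is quasi-stable (every nonzero fractional ideal of D is flat over its endomorphism ring), then T is quasi-stable. -/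
open scoped nonZeroDivisors

/-! Write `J = I T` and let `E = (I : I)`, `F = (J : J)`. Both `E` and `T` lie in `F`, so the
`F`-module `F J` is `F I`. As `K` is a localization of `E`, the multiplication map
`K ⊗_E E I → K` is injective; flatness of `E I` over `E` then makes `F ⊗_E E I → F I`
injective, hence an isomorphism, and `F I` is flat over `F` as a base change of a flat module. -/

open scoped TensorProduct
open Submodule

section Localization
variable {R A L : Type*} [CommRing R] [CommRing A] [CommRing L] [Algebra R A] [Algebra R L]
  [Algebra A L] [IsScalarTower R A L]

theorem Submodule.liftBaseChange_subtype_injective (S : Submonoid R) [IsLocalization S L]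
    (M : Submodule R L) :
    Function.Injective (M.subtype.liftBaseChange L) := by
  -- `L ⊗[R] M` is the localization of `M` at `S`, so it suffices to test elements `1 ⊗ₜ m`.
  have : IsLocalizedModule S (TensorProduct.mk R L M 1) :=
    (isLocalizedModule_iff_isBaseChange S L _).mpr (TensorProduct.isBaseChange R M L)
  refine IsLocalizedModule.injective_of_map_zero S (TensorProduct.mk R L M 1)
    (g := (M.subtype.liftBaseChange L).restrictScalars R) fun m hm => ?_
  simp_all

theorem flat_span_of_isLocalization (S : Submonoid R) [IsLocalization S L]
    (hA : Function.Injective (algebraMap A L)) (s : Set L) [Module.Flat R (span R s)] :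
    Module.Flat A (span A s) := by
  set μ := (span R s).subtype.liftBaseChange A
  have hμ : Function.Injective μ := by
    have hcomp : ⇑μ = (span R s).subtype.liftBaseChange L ∘
        ((IsScalarTower.toAlgHom R A L).toLinearMap.rTensor (span R s)) := by
      ext x
      induction x using TensorProduct.induction_on with
      | zero => simp
      | tmul a m => simp [μ, Algebra.smul_def]
      | add x y hx hy => simp_all
    rw [hcomp]
    exact (liftBaseChange_subtype_injective S _).comp
      (Module.Flat.rTensor_preserves_injective_linearMap _ hA)
  have hrange : LinearMap.range μ = span A s := by
    apply le_antisymm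
    · rintro _ ⟨x, rfl⟩
      induction x using TensorProduct.induction_on with
      | zero => simp
      | tmul a m => exact (span A s).smul_mem a (span_subset_span R A s m.2)
      | add x y hx hy => rw [map_add]; exact add_mem hx hy
    · rw [span_le]
      intro x hx
      exact ⟨1 ⊗ₜ ⟨x, subset_span hx⟩, by simp [μ]⟩
  exact Module.Flat.of_linearEquiv
    ((LinearEquiv.ofInjective μ hμ).trans (LinearEquiv.ofEq _ _ hrange)).symm

end Localization

theorem Subalgebra.coe_span_subset_span_of_le {R B : Type*} [CommSemiring R] [CommSemiring B]
    [Algebra R B] {T F : Subalgebra R B} (h : T ≤ F) (s : Set B) :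
    (span T s : Set B) ⊆ span F s := by
  let := (Subalgebra.inclusion h).toAlgebra
  have : IsScalarTower T F B := .of_algebraMap_smul fun _ _ => rfl
  exact span_subset_span T F s

section Overring
variable {D K : Type*} [CommRing D] [Field K] [Algebra D K]

theorem flat_span_of_le [IsFractionRing D K] {E F : Subalgebra D K} (h : E ≤ F) (s : Set K)
    [Module.Flat E (span E s)] : Module.Flat F (span F s) := by
  let := (Subalgebra.inclusion h).toAlgebra
  have : IsScalarTower E F K := .of_algebraMap_smul fun _ _ => rfl
  exact flat_span_of_isLocalization E⁰ Subtype.val_injective s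

theorem le_ends_restrictScalars {T : Subalgebra D K} (J : Submodule T K) :
    T ≤ ends D K (J.restrictScalars D) :=
  fun t ht _ hy => J.smul_mem ⟨t, ht⟩ hy

theorem ends_le_ends_span (T : Subalgebra D K) (I : Submodule D K) :
    ends D K I ≤ ends D K ((span T (I : Set K)).restrictScalars D) := by
  intro x hx y hy
  induction hy using span_induction with
  | mem z hz => exact subset_span (hx z hz)
  | zero => simp
  | add a b _ _ ha hb => rw [mul_add]; exact add_mem ha hb
  | smul t z _ hz => rw [mul_smul_comm]; exact (span T (I : Set K)).smul_mem t hz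

end Overring

theorem quasiStable_overring_of_surjective_extension_general
    (D K : Type*) [CommRing D] [Field K] [Algebra D K] [IsFractionRing D K]
    (T : Subalgebra D K)
    (hsurj : ∀ J : Submodule T K, J ≠ ⊥ → IsFractional (↥T)⁰ J →
      ∃ I : FractionalIdeal D⁰ K, I ≠ 0 ∧
        Submodule.span T ((I : Submodule D K) : Set K) = J)
    (hD : ∀ I : FractionalIdeal D⁰ K, I ≠ 0 → IsQuasiStable D K (I : Submodule D K)) :
    ∀ J : Submodule T K, J ≠ ⊥ → IsFractional (↥T)⁰ J →
      IsQuasiStable D K (J.restrictScalars D) := by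
  intro J hJ hJf
  obtain ⟨I, hI0, rfl⟩ := hsurj J hJ hJf
  set N := (span T ((I : Submodule D K) : Set K)).restrictScalars D
  have hTF : T ≤ ends D K N := le_ends_restrictScalars _
  have hspan : overEnds D K N = span (ends D K N) ((I : Submodule D K) : Set K) :=
    le_antisymm (span_le.mpr (Subalgebra.coe_span_subset_span_of_le hTF _))
      (span_mono subset_span)
  have : Module.Flat (ends D K I) (span (ends D K I) ((I : Submodule D K) : Set K)) := hD I hI0
  rw [IsQuasiStable, hspan]
  exact flat_span_of_le (ends_le_ends_span T _) _

set_option synthInstance.maxHeartbeats 1000000 in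
/-- If `T` is an overring of `D` such that every nonzero fractional ideal of `T` is the
extension `IT` of some nonzero fractional ideal `I` of `D`, and `D` is quasi-stable,
then `T` is quasi-stable. -/
theorem quasiStable_overring_of_surjective_extension
    (D K : Type*) [CommRing D] [IsDomain D] [Field K] [Algebra D K] [IsFractionRing D K]
    (T : Subalgebra D K)
    (hsurj : ∀ J : Submodule T K, J ≠ ⊥ → IsFractional (↥T)⁰ J →
      ∃ I : FractionalIdeal D⁰ K, I ≠ 0 ∧
        Submodule.span T ((I : Submodule D K) : Set K) = J)
    (hD : ∀ I : FractionalIdeal D⁰ K, I ≠ 0 → IsQuasiStable D K (I : Submodule D K)) :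
    ∀ J : Submodule T K, J ≠ ⊥ → IsFractional (↥T)⁰ J →
      IsQuasiStable D K (J.restrictScalars D) :=
  quasiStable_overring_of_surjective_extension_general D K T hsurj hD
end
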